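/- Let the set E_k := {(x_k, T_k) ∈ ℝⁿ × ℝ | dist((x_k, T_k), Ω) ≤ δ_k} be the δ_k-enlargement of a closed set Ω ⊆ ℝⁿ × ℝ, and suppose (x̄_k, T̄_k) ∈ E_k with (x̄_k, T̄_k) → (x̄, T̄) ∈ Ω and δ_k ↓ 0. Then Limsup_{k→∞} N((x̄_k, T̄_k); E_k) ⊆ N((x̄, T̄); Ω), where N denotes the limiting normal cone and Limsup the Painlevé–Kuratowski outer limit. -/
import Mathlib

set_option maxHeartbeats 1000000

open Filter
open scoped RealInnerProductSpace

/-- Regular (Fréchet) normal cone. -/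
def regNormal {E : Type*} [NormedAddCommGroup E] [InnerProductSpace ℝ E]
    (C : Set E) (x : E) : Set E :=
  {v | ∀ ε > (0:ℝ), ∃ δ > (0:ℝ), ∀ u ∈ C, ‖u - x‖ < δ → ⟪v, u - x⟫ ≤ ε * ‖u - x‖}

/-- Limiting (Mordukhovich) normal cone. -/
def limNormal {E : Type*} [NormedAddCommGroup E] [InnerProductSpace ℝ E]
    (C : Set E) (x : E) : Set E :=
  {v | ∃ xs vs : ℕ → E, (∀ m, xs m ∈ C ∧ vs m ∈ regNormal C (xs m)) ∧
    Tendsto xs atTop (nhds x) ∧ Tendsto vs atTop (nhds v)}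

section Helpers

open Metric

variable {E : Type*} [NormedAddCommGroup E] [InnerProductSpace ℝ E]

lemma regNormal_anti {C D : Set E} (h : C ⊆ D) (x : E) :
    regNormal D x ⊆ regNormal C x := by
  intro v hv ε hε
  obtain ⟨d, hd, H⟩ := hv ε hε
  exact ⟨d, hd, fun u hu => H u (h hu)⟩

lemma zero_mem_regNormal (C : Set E) (x : E) : (0 : E) ∈ regNormal C x := by
  intro ε hε
  exact ⟨1, one_pos, fun u _ _ => by
    rw [inner_zero_left]
    positivity⟩

lemma regNormal_interior {C : Set E} {x v : E} (hx : x ∈ interior C)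
    (hv : v ∈ regNormal C x) : v = 0 := by
  by_contra hv0
  have hvn : 0 < ‖v‖ := norm_pos_iff.2 hv0
  have key : ∀ ε > (0:ℝ), ‖v‖ ≤ ε := by
    intro ε hε
    obtain ⟨d, hd, H⟩ := hv ε hε
    obtain ⟨r, hr, hball⟩ := Metric.isOpen_iff.1 isOpen_interior x hx
    set t : ℝ := min (r / (2 * ‖v‖)) (d / (2 * ‖v‖)) with ht
    have htpos : 0 < t := by positivity
    have h1 : t * ‖v‖ < r := by
      calc t * ‖v‖ ≤ (r / (2 * ‖v‖)) * ‖v‖ := by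
            apply mul_le_mul_of_nonneg_right (min_le_left _ _) (norm_nonneg _)
        _ = r / 2 := by field_simp
        _ < r := by linarith
    have h2 : t * ‖v‖ < d := by
      calc t * ‖v‖ ≤ (d / (2 * ‖v‖)) * ‖v‖ := by
            apply mul_le_mul_of_nonneg_right (min_le_right _ _) (norm_nonneg _)
        _ = d / 2 := by field_simp
        _ < d := by linarith
    have hu : x + t • v ∈ C := by
      apply interior_subset; apply hball
      simp only [Metric.mem_ball, dist_eq_norm, add_sub_cancel_left, norm_smul,
        Real.norm_eq_abs, abs_of_pos htpos]
      exact h1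
    have hnorm : ‖x + t • v - x‖ = t * ‖v‖ := by
      simp [norm_smul, abs_of_pos htpos]
    have := H _ hu (by rw [hnorm]; exact h2)
    rw [show x + t • v - x = t • v by abel, real_inner_smul_right,
      real_inner_self_eq_norm_sq, norm_smul, Real.norm_eq_abs,
      abs_of_pos htpos] at this
    nlinarith [mul_pos htpos hvn]
  have := key (‖v‖ / 2) (by positivity)
  linarith

/-- Proximal normals are regular normals. -/
lemma prox_mem_regNormal {Ω : Set E} {p x : E} (hp : p ∈ Ω)
    (hnear : ∀ u ∈ Ω, ‖x - p‖ ≤ ‖x - u‖) {a : ℝ} (ha : 0 ≤ a) :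
    a • (x - p) ∈ regNormal Ω p := by
  intro ε hε
  refine ⟨2 * ε / (a + 1), by positivity, fun u hu hud => ?_⟩
  have key : ⟪x - p, u - p⟫ ≤ ‖u - p‖ ^ 2 / 2 := by
    have h1 : ‖x - p‖ ^ 2 ≤ ‖x - u‖ ^ 2 := by
      have := hnear u hu
      nlinarith [norm_nonneg (x - p), norm_nonneg (x - u)]
    have h2 : x - u = (x - p) - (u - p) := by abel
    have h3 := norm_sub_sq_real (x - p) (u - p)
    rw [h2] at h1
    nlinarith
  rw [real_inner_smul_left]
  have h4 : a * ‖u - p‖ / 2 ≤ ε := by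
    have h5 : (a + 1) * ‖u - p‖ < 2 * ε := by
      rw [← lt_div_iff₀' (by positivity)]
      exact hud
    nlinarith [norm_nonneg (u - p)]
  nlinarith [norm_nonneg (u - p), mul_le_mul_of_nonneg_left key ha]


lemma regNormal_closedBall {c x v : E} {δ : ℝ} (hδ : 0 < δ) (hx : ‖x - c‖ = δ)
    (hv : v ∈ regNormal (closedBall c δ) x) : ∃ a ≥ (0:ℝ), v = a • (x - c) := by
  set e := x - c with he
  have hxe : x = c + e := by rw [he]; abel
  have hee : ⟪e, e⟫ = δ ^ 2 := by
    rw [real_inner_self_eq_norm_sq, hx]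
  set a := ⟪v, e⟫ / δ ^ 2 with ha
  have hve : ⟪v, e⟫ = a * δ ^ 2 := by
    rw [ha]; field_simp
  set w := v - a • e with hw
  have hvw : v = a • e + w := by rw [hw]; abel
  have hwe : ⟪w, e⟫ = 0 := by
    rw [hw, inner_sub_left, real_inner_smul_left, hee, hve]; ring
  have hew : ⟪e, w⟫ = 0 := by rw [real_inner_comm]; exact hwe
  -- Step 1 : a ≥ 0
  have hapos : 0 ≤ a := by
    by_contra hneg
    push_neg at hneg
    obtain ⟨d, hd, H⟩ := hv (-a * δ / 2) (by nlinarith)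
    set t : ℝ := min (1/2) (d / (2 * δ)) with htdef
    have htpos : 0 < t := by positivity
    have ht1 : t ≤ 1/2 := min_le_left _ _
    have htd : t * δ < d := by
      have h2 : t ≤ d / (2 * δ) := min_le_right _ _
      calc t * δ ≤ (d / (2 * δ)) * δ := by nlinarith
        _ = d / 2 := by field_simp
        _ < d := by linarith
    have hu : c + (1 - t) • e ∈ closedBall c δ := by
      rw [mem_closedBall, dist_eq_norm]
      have h2 : c + (1 - t) • e - c = (1 - t) • e := by abel
      rw [h2, norm_smul, Real.norm_eq_abs, abs_of_pos (by linarith), hx]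
      nlinarith
    have hux : c + (1 - t) • e - x = (-t) • e := by
      rw [hxe]; module
    have hnx : ‖c + (1 - t) • e - x‖ = t * δ := by
      rw [hux, norm_smul, Real.norm_eq_abs, abs_neg, abs_of_pos htpos, hx]
    have hfin := H _ hu (by rw [hnx]; exact htd)
    rw [hux, real_inner_smul_right, hve, norm_smul, Real.norm_eq_abs, abs_neg,
      abs_of_pos htpos, hx] at hfin
    nlinarith [mul_pos htpos (mul_pos hδ hδ)]
  -- Step 2 : w = 0
  have hwz : w = 0 := by
    by_contra hw0
    have hwn : 0 < ‖w‖ := norm_pos_iff.2 hw0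
    have key : ∀ ε > (0:ℝ), ‖w‖ ≤ 3 * ε := by
      intro ε hε
      obtain ⟨d, hd, H⟩ := hv ε hε
      set f : E := (δ / ‖w‖) • w with hf
      have hfn : ‖f‖ = δ := by
        rw [hf, norm_smul, Real.norm_eq_abs, abs_of_pos (by positivity)]
        field_simp
      have hef : ⟪e, f⟫ = 0 := by
        rw [hf, real_inner_smul_right, hew, mul_zero]
      have hvf : ⟪v, f⟫ = δ * ‖w‖ := by
        rw [hf, real_inner_smul_right, hvw, inner_add_left, real_inner_smul_left,
          hew, real_inner_self_eq_norm_sq]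
        field_simp
        ring
      set t : ℝ := min 1 (min (d / (2 * δ)) (ε / (a * δ + 1))) with htdef
      have htpos : 0 < t := by
        apply lt_min one_pos
        exact lt_min (by positivity) (by positivity)
      have ht1 : t ≤ 1 := min_le_left _ _
      have htd : t * δ < d := by
        have h2 : t ≤ d / (2 * δ) := le_trans (min_le_right _ _) (min_le_left _ _)
        calc t * δ ≤ (d / (2 * δ)) * δ := by nlinarith
          _ = d / 2 := by field_simp
          _ < d := by linarith
      have htε : a * δ * t ≤ ε := by
        have h2 : t ≤ ε / (a * δ + 1) := le_trans (min_le_right _ _) (min_le_right _ _)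
        have h5 : (0:ℝ) < a * δ + 1 := by positivity
        have h3 : a * δ * t ≤ a * δ * (ε / (a * δ + 1)) :=
          mul_le_mul_of_nonneg_left h2 (by positivity)
        have h6 : a * δ * (ε / (a * δ + 1)) = ε * ((a * δ) / (a * δ + 1)) := by ring
        have h7 : (a * δ) / (a * δ + 1) ≤ 1 := by
          rw [div_le_one h5]; linarith
        nlinarith
      set s : ℝ := Real.sqrt (1 + t ^ 2) with hsdef
      have hs1 : 1 ≤ s := by
        have h0 : Real.sqrt 1 ≤ Real.sqrt (1 + t ^ 2) := Real.sqrt_le_sqrt (by nlinarith)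
        rw [Real.sqrt_one] at h0
        rw [hsdef]; exact h0
      have hspos : 0 < s := lt_of_lt_of_le one_pos hs1
      have hsne : s ≠ 0 := ne_of_gt hspos
      have hssq : s ^ 2 = 1 + t ^ 2 := Real.sq_sqrt (by positivity)
      have hsinv : 1 - t ^ 2 / 2 ≤ s⁻¹ := by
        have hq : (0:ℝ) < 1 + t ^ 2 / 2 := by positivity
        have h2 : s ≤ 1 + t ^ 2 / 2 := by
          rw [hsdef, show (1 + t^2/2 : ℝ) = Real.sqrt ((1 + t^2/2)^2) by
            rw [Real.sqrt_sq (by positivity)]]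
          exact Real.sqrt_le_sqrt (by nlinarith)
        have h3 : (1 - t ^ 2 / 2) ≤ (1 + t ^ 2 / 2)⁻¹ := by
          rw [← one_div, le_div_iff₀ hq]
          nlinarith
        have h4 : (1 + t ^ 2 / 2)⁻¹ ≤ s⁻¹ := by gcongr
        linarith
      set u : E := c + s⁻¹ • (e + t • f) with hudef
      have hnef : ‖e + t • f‖ ^ 2 = δ ^ 2 * s ^ 2 := by
        rw [norm_add_sq_real, real_inner_smul_right, hef, norm_smul, hx, hfn,
          Real.norm_eq_abs, abs_of_pos htpos, hssq]
        ring
      have hnef' : ‖e + t • f‖ = δ * s := by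
        nlinarith [norm_nonneg (e + t • f), mul_pos hδ hspos]
      have huc : u ∈ closedBall c δ := by
        rw [mem_closedBall, dist_eq_norm]
        have h2 : u - c = s⁻¹ • (e + t • f) := by rw [hudef]; abel
        rw [h2, norm_smul, Real.norm_eq_abs, abs_of_pos (inv_pos.2 hspos), hnef']
        rw [show s⁻¹ * (δ * s) = δ by field_simp]
      have hux : u - x = (s⁻¹ - 1) • e + (s⁻¹ * t) • f := by
        rw [hudef, hxe]; module
      have hnux_sq : ‖u - x‖ ^ 2 = δ ^ 2 * (2 - 2 * s⁻¹) := by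
        rw [hux, norm_add_sq_real, real_inner_smul_left, real_inner_smul_right, hef,
          norm_smul, norm_smul, hx, hfn, Real.norm_eq_abs, Real.norm_eq_abs]
        have hs2 : s⁻¹ ^ 2 * (1 + t ^ 2) = 1 := by
          field_simp
          linarith [hssq]
        rw [mul_pow, mul_pow, sq_abs, sq_abs]
        linear_combination δ ^ 2 * hs2
      have hnux_le : ‖u - x‖ ≤ δ * t := by
        have h6 : ‖u - x‖ ^ 2 ≤ (δ * t) ^ 2 := by
          rw [hnux_sq]; nlinarith [hsinv, sq_nonneg δ]
        nlinarith [norm_nonneg (u - x), mul_pos hδ htpos]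
      have hH := H u huc (lt_of_le_of_lt hnux_le (by rw [mul_comm]; exact htd))
      have hinner : ⟪v, u - x⟫ = (s⁻¹ - 1) * (a * δ ^ 2) + s⁻¹ * t * (δ * ‖w‖) := by
        rw [hux, inner_add_right, real_inner_smul_right, real_inner_smul_right, hve, hvf]
        try ring
      rw [hinner] at hH
      have b3 : ε * ‖u - x‖ ≤ ε * (δ * t) := mul_le_mul_of_nonneg_left hnux_le (le_of_lt hε)
      have hA : (0:ℝ) ≤ a * δ ^ 2 := by positivity
      have hB : (0:ℝ) ≤ t * (δ * ‖w‖) := by positivity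
      have b1 : -(t ^ 2 / 2) * (a * δ ^ 2) ≤ (s⁻¹ - 1) * (a * δ ^ 2) :=
        mul_le_mul_of_nonneg_right (by linarith only [hsinv]) hA
      have b2 : (1 - t ^ 2 / 2) * (t * (δ * ‖w‖)) ≤ s⁻¹ * (t * (δ * ‖w‖)) :=
        mul_le_mul_of_nonneg_right hsinv hB
      have hfinal : (1 - t ^ 2 / 2) * t * (δ * ‖w‖) - t ^ 2 / 2 * (a * δ ^ 2) ≤ ε * (δ * t) := by
        nlinarith only [hH, b1, b2, b3]
      have c2 : (a * δ * t) * (δ * t) ≤ ε * (δ * t) :=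
        mul_le_mul_of_nonneg_right htε (by positivity)
      have ht2 : t ^ 2 ≤ 1 := by nlinarith only [ht1, htpos]
      have c4 : (1 / 2 : ℝ) * (t * (δ * ‖w‖)) ≤ (1 - t ^ 2 / 2) * (t * (δ * ‖w‖)) :=
        mul_le_mul_of_nonneg_right (by linarith only [ht2]) hB
      have c6 : (t * δ) * ‖w‖ ≤ (t * δ) * (3 * ε) := by
        nlinarith only [hfinal, c2, c4]
      exact le_of_mul_le_mul_left c6 (mul_pos htpos hδ)
    have h9 := key (‖w‖ / 4) (by positivity)
    linarith
  exact ⟨a, hapos, by rw [hvw, hwz, add_zero]⟩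

lemma enlargement_regNormal {Ω : Set E} [ProperSpace E] (hΩ : IsClosed Ω)
    (hne : Ω.Nonempty) {δ : ℝ} (hδ : 0 ≤ δ) {x v : E}
    (hx : Metric.infDist x Ω ≤ δ)
    (hv : v ∈ regNormal {z | Metric.infDist z Ω ≤ δ} x) :
    ∃ p ∈ Ω, dist p x ≤ δ ∧ v ∈ regNormal Ω p := by
  obtain ⟨p, hpΩ, hpd⟩ := hΩ.exists_infDist_eq_dist hne x
  rcases lt_or_eq_of_le hx with hlt | heq
  · have hop : IsOpen {z | Metric.infDist z Ω < δ} :=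
      isOpen_lt (continuous_infDist_pt Ω) continuous_const
    have hxint : x ∈ interior {z | Metric.infDist z Ω ≤ δ} :=
      mem_interior.2 ⟨{z | Metric.infDist z Ω < δ},
        fun z hz => show Metric.infDist z Ω ≤ δ from le_of_lt hz, hop, hlt⟩
    have hv0 : v = 0 := regNormal_interior hxint hv
    refine ⟨p, hpΩ, ?_, hv0 ▸ zero_mem_regNormal Ω p⟩
    rw [dist_comm, ← hpd]; exact hx
  · rcases eq_or_lt_of_le hδ with h0 | hpos
    · have hxΩ : x ∈ Ω := by
        rw [hΩ.mem_iff_infDist_zero hne, heq, ← h0]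
      refine ⟨x, hxΩ, by simp [hδ], ?_⟩
      refine regNormal_anti (fun z hz => ?_) x hv
      exact le_trans (le_of_eq (Metric.infDist_zero_of_mem hz)) hδ
    · have hxp : ‖x - p‖ = δ := by rw [← dist_eq_norm, ← hpd, heq]
      have hsub : Metric.closedBall p δ ⊆ {z | Metric.infDist z Ω ≤ δ} :=
        fun z hz => le_trans (Metric.infDist_le_dist_of_mem hpΩ) hz
      obtain ⟨a, ha0, hva⟩ := regNormal_closedBall hpos hxp (regNormal_anti hsub x hv)
      have hnear : ∀ u ∈ Ω, ‖x - p‖ ≤ ‖x - u‖ := by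
        intro u hu
        rw [hxp, ← dist_eq_norm, ← heq]
        exact Metric.infDist_le_dist_of_mem hu
      refine ⟨p, hpΩ, ?_, hva ▸ prox_mem_regNormal hpΩ hnear ha0⟩
      rw [dist_comm, ← hpd, heq]

end Helpers

/-- Outer limit of limiting normal cones to shrinking enlargements of a closed set
`Ω ⊆ ℝⁿ × ℝ` at converging points is contained in the limiting normal cone to `Ω`. -/
theorem stmt17 (n : ℕ) (Ω : Set (WithLp 2 (EuclideanSpace ℝ (Fin n) × ℝ)))
    (hΩ : IsClosed Ω)
    (δ : ℕ → ℝ) (hδpos : ∀ k, 0 ≤ δ k) (hδanti : Antitone δ)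
    (hδ0 : Tendsto δ atTop (nhds 0))
    (Ek : ℕ → Set (WithLp 2 (EuclideanSpace ℝ (Fin n) × ℝ)))
    (hEk : ∀ k, Ek k = {z | Metric.infDist z Ω ≤ δ k})
    (pt : ℕ → WithLp 2 (EuclideanSpace ℝ (Fin n) × ℝ))
    (pb : WithLp 2 (EuclideanSpace ℝ (Fin n) × ℝ))
    (hpt : ∀ k, pt k ∈ Ek k) (hpb : pb ∈ Ω)
    (hconv : Tendsto pt atTop (nhds pb)) :
    ∀ v : WithLp 2 (EuclideanSpace ℝ (Fin n) × ℝ),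
      (∃ φ : ℕ → ℕ, StrictMono φ ∧ ∃ vs : ℕ → WithLp 2 (EuclideanSpace ℝ (Fin n) × ℝ),
        (∀ m, vs m ∈ limNormal (Ek (φ m)) (pt (φ m))) ∧
        Tendsto vs atTop (nhds v)) →
      v ∈ limNormal Ω pb := by
  intro v ⟨φ, hφ, vs, hvs, hvsconv⟩
  choose xs' vs' hmem hxconv hvconv using hvs
  have pick : ∀ m : ℕ, ∃ jm : ℕ, dist (xs' m jm) (pt (φ m)) < 1 / (m + 1) ∧
      dist (vs' m jm) (vs m) < 1 / (m + 1) := by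
    intro m
    have hp1 : (0:ℝ) < 1 / (m + 1) := by positivity
    obtain ⟨j1, hj1⟩ := (Metric.tendsto_atTop.1 (hxconv m)) _ hp1
    obtain ⟨j2, hj2⟩ := (Metric.tendsto_atTop.1 (hvconv m)) _ hp1
    exact ⟨max j1 j2, hj1 _ (le_max_left _ _), hj2 _ (le_max_right _ _)⟩
  choose j hj1 hj2 using pick
  set X : ℕ → WithLp 2 (EuclideanSpace ℝ (Fin n) × ℝ) := fun m => xs' m (j m) with hX
  set W : ℕ → WithLp 2 (EuclideanSpace ℝ (Fin n) × ℝ) := fun m => vs' m (j m) with hW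
  have hφtop : Tendsto φ atTop atTop := hφ.tendsto_atTop
  have hinv : Tendsto (fun m : ℕ => 1 / ((m:ℝ) + 1)) atTop (nhds 0) :=
    tendsto_one_div_add_atTop_nhds_zero_nat
  have hptφ : Tendsto (fun m => dist (pt (φ m)) pb) atTop (nhds 0) :=
    tendsto_iff_dist_tendsto_zero.1 (hconv.comp hφtop)
  have hXbound : ∀ m : ℕ, dist (X m) pb ≤ 1 / ((m:ℝ) + 1) + dist (pt (φ m)) pb := by
    intro m
    have h1 := hj1 m
    have h2 := dist_triangle (X m) (pt (φ m)) pb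
    push_cast at h1 ⊢
    have h3 : dist (X m) (pt (φ m)) < 1 / ((m:ℝ) + 1) := h1
    linarith
  have hXpb : Tendsto (fun m => dist (X m) pb) atTop (nhds 0) :=
    squeeze_zero (fun m => dist_nonneg) hXbound (by simpa using hinv.add hptφ)
  have key : ∀ m, ∃ p ∈ Ω, dist p (X m) ≤ δ (φ m) ∧ W m ∈ regNormal Ω p := by
    intro m
    have h1 : X m ∈ Ek (φ m) := (hmem m (j m)).1
    have h2 : W m ∈ regNormal (Ek (φ m)) (X m) := (hmem m (j m)).2
    rw [hEk (φ m)] at h1 h2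
    exact enlargement_regNormal hΩ ⟨pb, hpb⟩ (hδpos (φ m)) h1 h2
  choose P hPΩ hPd hPv using key
  refine ⟨P, W, fun m => ⟨hPΩ m, hPv m⟩, ?_, ?_⟩
  · rw [tendsto_iff_dist_tendsto_zero]
    have hbound : ∀ m : ℕ, dist (P m) pb ≤ δ (φ m) + dist (X m) pb := by
      intro m
      have := dist_triangle (P m) (X m) pb
      linarith [hPd m]
    exact squeeze_zero (fun m => dist_nonneg) hbound
      (by simpa using (hδ0.comp hφtop).add hXpb)
  · rw [tendsto_iff_dist_tendsto_zero]
    have hbound : ∀ m : ℕ, dist (W m) v ≤ 1 / ((m:ℝ) + 1) + dist (vs m) v := by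
      intro m
      have h1 := hj2 m
      have h2 := dist_triangle (W m) (vs m) v
      push_cast at h1 ⊢
      linarith
    exact squeeze_zero (fun m => dist_nonneg) hbound
      (by simpa using hinv.add (tendsto_iff_dist_tendsto_zero.1 hvsconv))
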